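/- Let p and q be probability density functions on a measurable space (nonnegative measurable functions integrating to 1 with respect to a σ-finite measure μ). Define C(q) = ∫ p(x) log(p(x)/(p(x)+q(x))) dμ + ∫ q(x) log(q(x)/(p(x)+q(x))) dμ (with the convention 0·log 0 = 0). Then C(q) ≥ -2 log 2, with equality if p = q μ-almost everywhere. -/

import Mathlib

/-!
Pointwise, `a log (a/(a+b)) + b log (b/(a+b)) = -(a+b) H(a/(a+b))`, where `H` is the binary
entropy. Since `H ≤ log 2`, with equality at `1/2`, integrating against `p + q`, whose total
mass is `2`, gives `C(q) ≥ -2 log 2`, with equality when `p = q`.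
-/

open Real MeasureTheory

namespace Real

/-- No sign or nonvanishing conditions are needed: for `a + b = 0` both sides vanish, since
`a / 0 = 0` and `log 0 = 0`. -/
theorem mul_log_div_add_mul_log_div_eq_neg_mul_binEntropy (a b : ℝ) :
    a * log (a / (a + b)) + b * log (b / (a + b)) =
      -((a + b) * binEntropy (a / (a + b))) := by
  rcases eq_or_ne (a + b) 0 with hs | hs
  · simp [hs]
  have hb : 1 - a / (a + b) = b / (a + b) := by field_simp; ring
  rw [binEntropy, hb, log_inv, log_inv]
  field_simp
  ring

theorem add_self_mul_binEntropy_div_add_self (a : ℝ) :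
    (a + a) * binEntropy (a / (a + a)) = (a + a) * log 2 := by
  rcases eq_or_ne a 0 with rfl | ha
  · simp
  rw [show a / (a + a) = 2⁻¹ by field_simp; ring, binEntropy_two_inv]

end Real

theorem stmt_2_general {α : Type*} [MeasurableSpace α] (μ : Measure α)
    (p q : α → ℝ)
    (hp0 : ∀ x, 0 ≤ p x) (hq0 : ∀ x, 0 ≤ q x)
    (hp1 : ∫ x, p x ∂μ = 1) (hq1 : ∫ x, q x ∂μ = 1)
    (hint1 : Integrable (fun x => p x * Real.log (p x / (p x + q x))) μ)
    (hint2 : Integrable (fun x => q x * Real.log (q x / (p x + q x))) μ) :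
    -2 * Real.log 2 ≤
      (∫ x, p x * Real.log (p x / (p x + q x)) ∂μ) +
        (∫ x, q x * Real.log (q x / (p x + q x)) ∂μ) ∧
    (p =ᵐ[μ] q →
      (∫ x, p x * Real.log (p x / (p x + q x)) ∂μ) +
        (∫ x, q x * Real.log (q x / (p x + q x)) ∂μ) = -2 * Real.log 2) := by
  have hp : Integrable p μ := .of_integral_ne_zero (by simp [hp1])
  have hq : Integrable q μ := .of_integral_ne_zero (by simp [hq1])
  have hC : (fun x => p x * log (p x / (p x + q x)) + q x * log (q x / (p x + q x))) =
      fun x => -((p x + q x) * binEntropy (p x / (p x + q x))) :=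
    funext fun x => mul_log_div_add_mul_log_div_eq_neg_mul_binEntropy (p x) (q x)
  have hH : Integrable (fun x => (p x + q x) * binEntropy (p x / (p x + q x))) μ := by
    refine (hint1.add hint2).neg.congr (ae_of_all _ fun x => ?_)
    simp only [Pi.neg_apply, Pi.add_apply, mul_log_div_add_mul_log_div_eq_neg_mul_binEntropy,
      neg_neg]
  have hmass : ∫ x, (p x + q x) * log 2 ∂μ = 2 * log 2 := by
    rw [integral_mul_const, integral_add hp hq, hp1, hq1]
    norm_num
  rw [← integral_add hint1 hint2, hC, integral_neg, neg_mul, ← hmass]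
  refine ⟨neg_le_neg <| integral_mono hH ((hp.add hq).mul_const _) fun x =>
    mul_le_mul_of_nonneg_left binEntropy_le_log_two (add_nonneg (hp0 x) (hq0 x)), fun hpq => ?_⟩
  refine congrArg Neg.neg (integral_congr_ae ?_)
  filter_upwards [hpq] with x hx
  rw [hx, add_self_mul_binEntropy_div_add_self]

/-- For probability densities `p`, `q` w.r.t. a σ-finite measure `μ`,
`C(q) = ∫ p log (p/(p+q)) + ∫ q log (q/(p+q)) ≥ -2 log 2`,
with equality if `p = q` μ-a.e.  (In Lean, `Real.log 0 = 0` and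
`0 * x = 0`, so the convention `0 · log 0 = 0` holds automatically.) -/
theorem stmt_2 {α : Type*} [MeasurableSpace α] (μ : Measure α) [SigmaFinite μ]
    (p q : α → ℝ) (hpm : Measurable p) (hqm : Measurable q)
    (hp0 : ∀ x, 0 ≤ p x) (hq0 : ∀ x, 0 ≤ q x)
    (hp1 : ∫ x, p x ∂μ = 1) (hq1 : ∫ x, q x ∂μ = 1)
    (hint1 : Integrable (fun x => p x * Real.log (p x / (p x + q x))) μ)
    (hint2 : Integrable (fun x => q x * Real.log (q x / (p x + q x))) μ) :
    -2 * Real.log 2 ≤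
      (∫ x, p x * Real.log (p x / (p x + q x)) ∂μ) +
        (∫ x, q x * Real.log (q x / (p x + q x)) ∂μ) ∧
    (p =ᵐ[μ] q →
      (∫ x, p x * Real.log (p x / (p x + q x)) ∂μ) +
        (∫ x, q x * Real.log (q x / (p x + q x)) ∂μ) = -2 * Real.log 2) :=
  stmt_2_general μ p q hp0 hq0 hp1 hq1 hint1 hint2
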